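/- arXiv:1207.3514 — 2 statements merged into one kernel-verified Lean document; each statement's English description precedes it below -/
import Mathlib

section
/- Let G ⇒ M be a topological groupoid, h : G → ℝᴺ a continuous groupoid homomorphism, and define H : G × [0,1] → ℝᴺ by H(γ,t) = t·h(γ). Let G_H = (G × [0,1])_H be the semi-direct groupoid of the product groupoid G × [0,1] (product of G with the space [0,1]) by H, with units M × [0,1] × ℝᴺ. Then the map θ : G_h × (0,1] → (G_H)|_{(0,1]} given by θ(γ, X, ε) = (γ, ε, ε·X) (and on units θ₀(x, X, ε) = (x, ε, ε·X)) is an isomorphism of topological groupoids, with inverse θ⁻¹(γ, ε, X) = (γ, X/ε, ε). -/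
/-!
Both groupoids have the arrows of `G` as first coordinate and are otherwise built on
`ℝᴺ × (0,1]`, so `θ` is `id × ρ` with `ρ(X, ε) = (ε, ε • X)`, a homeomorphism because
`ε` never vanishes. Rescaling by `ε` turns the twist `X ↦ X + h γ` of `G_h` into the twist
`Y ↦ Y + ε • h γ` of `G_H` at time `ε`, which is why `θ` intertwines the structure maps.
-/

/-- An (algebraic) groupoid over a set of units: `mul γ η` is only meaningful
when `s γ = r η` (it may take junk values otherwise). -/
structure Gpd (A M : Type*) where
  s : A → M
  r : A → M
  mul : A → A → A
  unit : M → A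
  inv : A → A
  s_unit : ∀ m, s (unit m) = m
  r_unit : ∀ m, r (unit m) = m
  s_mul : ∀ γ η, s γ = r η → s (mul γ η) = s η
  r_mul : ∀ γ η, s γ = r η → r (mul γ η) = r γ
  mul_assoc' : ∀ γ η δ, s γ = r η → s η = r δ → mul (mul γ η) δ = mul γ (mul η δ)
  unit_mul : ∀ γ, mul (unit (r γ)) γ = γ
  mul_unit : ∀ γ, mul γ (unit (s γ)) = γ
  s_inv : ∀ γ, s (inv γ) = r γ
  r_inv : ∀ γ, r (inv γ) = s γ
  mul_inv : ∀ γ, mul γ (inv γ) = unit (r γ)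
  inv_mul : ∀ γ, mul (inv γ) γ = unit (s γ)

/-- A groupoid homomorphism with values in an (additive) abelian group. -/
def IsGpdHom {A M V : Type*} [AddCommGroup V] (G : Gpd A M) (h : A → V) : Prop :=
  ∀ γ η, G.s γ = G.r η → h (G.mul γ η) = h γ + h η

section Rescale

variable {𝕜 V : Type*} [Field 𝕜] [TopologicalSpace 𝕜] [ContinuousMul 𝕜] [ContinuousInv₀ 𝕜]
  [AddCommGroup V] [Module 𝕜 V] [TopologicalSpace V] [ContinuousSMul 𝕜 V]

def Homeomorph.rescale (S : Set 𝕜) (hS : (0 : 𝕜) ∉ S) : V × S ≃ₜ S × V where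
  toFun p := (p.2, (p.2 : 𝕜) • p.1)
  invFun q := ((q.1 : 𝕜)⁻¹ • q.2, q.1)
  left_inv p := by
    simp [smul_smul, inv_mul_cancel₀ (ne_of_mem_of_not_mem p.2.2 hS)]
  right_inv q := by
    simp [smul_smul, mul_inv_cancel₀ (ne_of_mem_of_not_mem q.1.2 hS)]
  continuous_toFun := by fun_prop
  continuous_invFun :=
    ((continuous_subtype_val.comp continuous_fst).inv₀
        fun q => ne_of_mem_of_not_mem q.1.2 hS).smul continuous_snd |>.prodMk continuous_fst

end Rescale

theorem stmt2_general {A M : Type*} [TopologicalSpace A] [TopologicalSpace M] (N : ℕ)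
    (G : Gpd A M) (h : A → (Fin N → ℝ)) :
    -- `E = (0,1]`, arrows of `G_h × (0,1]` are `A × ℝᴺ × E`,
    -- arrows of `(G_H)|_{(0,1]}` are `A × E × ℝᴺ`
    ∀ (θ : A × (Fin N → ℝ) × (Set.Ioc (0:ℝ) 1) → A × (Set.Ioc (0:ℝ) 1) × (Fin N → ℝ))
      (θ₀ : M × (Fin N → ℝ) × (Set.Ioc (0:ℝ) 1) → M × (Set.Ioc (0:ℝ) 1) × (Fin N → ℝ))
      (θinv : A × (Set.Ioc (0:ℝ) 1) × (Fin N → ℝ) → A × (Fin N → ℝ) × (Set.Ioc (0:ℝ) 1)),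
      (∀ p, θ p = (p.1, p.2.2, (p.2.2 : ℝ) • p.2.1)) →
      (∀ u, θ₀ u = (u.1, u.2.2, (u.2.2 : ℝ) • u.2.1)) →
      (∀ q, θinv q = (q.1, (q.2.1 : ℝ)⁻¹ • q.2.2, q.2.1)) →
      -- θ is a homeomorphism of the arrow spaces (θ₀ likewise on units):
      (Continuous θ ∧ Continuous θinv ∧ Continuous θ₀ ∧
        Function.LeftInverse θinv θ ∧ Function.RightInverse θinv θ) ∧
      -- θ intertwines the source maps:  s_h(γ,X,ε) = (s γ, X + h γ, ε),
      --                                 s_H(γ,ε,Y) = (s γ, ε, Y + ε·h γ)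
      (∀ p : A × (Fin N → ℝ) × (Set.Ioc (0:ℝ) 1),
        (G.s (θ p).1, (θ p).2.1, (θ p).2.2 + ((θ p).2.1 : ℝ) • h (θ p).1)
          = θ₀ (G.s p.1, p.2.1 + h p.1, p.2.2)) ∧
      -- θ intertwines the range maps:
      (∀ p : A × (Fin N → ℝ) × (Set.Ioc (0:ℝ) 1),
        (G.r (θ p).1, (θ p).2.1, (θ p).2.2) = θ₀ (G.r p.1, p.2.1, p.2.2)) ∧
      -- θ intertwines the products:
      --   in G_h × (0,1] : (γ,X,ε)·(η, X + h γ, ε) = (γ·η, X, ε)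
      --   in (G_H)|(0,1] : (γ,ε,Y)·(η, ε, Y + ε·h γ) = (γ·η, ε, Y)
      (∀ (γ η : A) (X : Fin N → ℝ) (ε : Set.Ioc (0:ℝ) 1), G.s γ = G.r η →
        θ (G.mul γ η, X, ε) = (G.mul γ η, ε, (ε : ℝ) • X) ∧
        θ (γ, X, ε) = (γ, ε, (ε : ℝ) • X) ∧
        θ (η, X + h γ, ε) = (η, ε, (ε : ℝ) • X + (ε : ℝ) • h γ)) := by
  intro θ θ₀ θinv hθ hθ₀ hθinv
  let ρ := Homeomorph.rescale (V := Fin N → ℝ) (Set.Ioc (0 : ℝ) 1) (by simp)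
  have hθρ : θ = (Homeomorph.refl A).prodCongr ρ := funext hθ
  have hθinvρ : θinv = ((Homeomorph.refl A).prodCongr ρ).symm := funext hθinv
  have hθ₀ρ : θ₀ = (Homeomorph.refl M).prodCongr ρ := funext hθ₀
  refine ⟨?_, fun p => ?_, fun p => ?_, fun γ η X ε _ => ?_⟩
  · rw [hθρ, hθinvρ, hθ₀ρ]
    exact ⟨Homeomorph.continuous _, Homeomorph.continuous _, Homeomorph.continuous _,
      Homeomorph.symm_apply_apply _, Homeomorph.apply_symm_apply _⟩
  · simp [hθ, hθ₀, smul_add]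
  · simp [hθ, hθ₀]
  · simp [hθ, smul_add]

/-- for a topological groupoid `G ⇒ M` with continuous homomorphism
`h : G → ℝᴺ` and `H(γ,t) = t·h(γ)`, the map `θ(γ, X, ε) = (γ, ε, ε·X)` (with
`θ₀(x, X, ε) = (x, ε, ε·X)` on units) is an isomorphism of topological groupoids
from `G_h × (0,1]` onto `(G_H)|_{(0,1]}`, with inverse `θ⁻¹(γ, ε, X) = (γ, X/ε, ε)`:
it is a homeomorphism on arrows, a homeomorphism on units, and it intertwines the
source, range and product maps of the two semi-direct groupoids. -/
theorem stmt2 {A M : Type*} [TopologicalSpace A] [TopologicalSpace M] (N : ℕ)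
    (G : Gpd A M) (hscont : Continuous G.s) (hrcont : Continuous G.r)
    (h : A → (Fin N → ℝ)) (hcont : Continuous h) (hh : IsGpdHom G h) :
    -- `E = (0,1]`, arrows of `G_h × (0,1]` are `A × ℝᴺ × E`,
    -- arrows of `(G_H)|_{(0,1]}` are `A × E × ℝᴺ`
    ∀ (θ : A × (Fin N → ℝ) × (Set.Ioc (0:ℝ) 1) → A × (Set.Ioc (0:ℝ) 1) × (Fin N → ℝ))
      (θ₀ : M × (Fin N → ℝ) × (Set.Ioc (0:ℝ) 1) → M × (Set.Ioc (0:ℝ) 1) × (Fin N → ℝ))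
      (θinv : A × (Set.Ioc (0:ℝ) 1) × (Fin N → ℝ) → A × (Fin N → ℝ) × (Set.Ioc (0:ℝ) 1)),
      (∀ p, θ p = (p.1, p.2.2, (p.2.2 : ℝ) • p.2.1)) →
      (∀ u, θ₀ u = (u.1, u.2.2, (u.2.2 : ℝ) • u.2.1)) →
      (∀ q, θinv q = (q.1, (q.2.1 : ℝ)⁻¹ • q.2.2, q.2.1)) →
      -- θ is a homeomorphism of the arrow spaces (θ₀ likewise on units):
      (Continuous θ ∧ Continuous θinv ∧ Continuous θ₀ ∧
        Function.LeftInverse θinv θ ∧ Function.RightInverse θinv θ) ∧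
      -- θ intertwines the source maps:  s_h(γ,X,ε) = (s γ, X + h γ, ε),
      --                                 s_H(γ,ε,Y) = (s γ, ε, Y + ε·h γ)
      (∀ p : A × (Fin N → ℝ) × (Set.Ioc (0:ℝ) 1),
        (G.s (θ p).1, (θ p).2.1, (θ p).2.2 + ((θ p).2.1 : ℝ) • h (θ p).1)
          = θ₀ (G.s p.1, p.2.1 + h p.1, p.2.2)) ∧
      -- θ intertwines the range maps:
      (∀ p : A × (Fin N → ℝ) × (Set.Ioc (0:ℝ) 1),
        (G.r (θ p).1, (θ p).2.1, (θ p).2.2) = θ₀ (G.r p.1, p.2.1, p.2.2)) ∧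
      -- θ intertwines the products:
      --   in G_h × (0,1] : (γ,X,ε)·(η, X + h γ, ε) = (γ·η, X, ε)
      --   in (G_H)|(0,1] : (γ,ε,Y)·(η, ε, Y + ε·h γ) = (γ·η, ε, Y)
      (∀ (γ η : A) (X : Fin N → ℝ) (ε : Set.Ioc (0:ℝ) 1), G.s γ = G.r η →
        θ (G.mul γ η, X, ε) = (G.mul γ η, ε, (ε : ℝ) • X) ∧
        θ (γ, X, ε) = (γ, ε, (ε : ℝ) • X) ∧
        θ (η, X + h γ, ε) = (η, ε, (ε : ℝ) • X + (ε : ℝ) • h γ)) :=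
  stmt2_general N G h
end

section
/- With X, ρ, i_∂, h as above, the map (r,s) : Γ(X) × ℝᴺ → (X × ℝᴺ) × (X × ℝᴺ), given by (x,y,X₀) ↦ ((x,X₀), (y, X₀ + (i_∂(x) − i_∂(y), log(ρ(x)/ρ(y))))) on X̊ × X̊ × ℝᴺ and (x,y,α,X₀) ↦ ((x,X₀), (y, X₀ + (i_∂(x) − i_∂(y), α))) on ∂X × ∂X × ℝ × ℝᴺ, is a closed map. Consequently the semi-direct groupoid Γ(X)_h is a free and proper groupoid. -/
/-!
The map `(r,s)` is a closed embedding, hence closed and proper. It is the restriction to the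
closed subset `Γ(X) × ℝᴺ` of a map on `X × X × ℝ × ℝᴺ` which has a continuous left inverse:
`x`, `y` and `X₀` are read off from the target directly, and `α` as the difference of the last
coordinates of `X₀ + h γ` and `X₀`. Freeness holds because `α` is the last coordinate of `h γ`.
-/

/-- The b-groupoid of `(X, ρ)` with its topology as a subspace of `X × X × ℝ`
(this subspace topology realizes the b-topology described in the paper:
`(xₙ,yₙ) → (x,y,α)` iff `xₙ → x`, `yₙ → y` and `log(ρ xₙ / ρ yₙ) → α`). -/
def bGpdSet {X : Type*} (ρ : X → ℝ) : Set (X × X × ℝ) :=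
  {p | ρ p.1 = Real.exp p.2.2 * ρ p.2.1}

/-- `h(x,y,α) = (i_∂ x − i_∂ y, α)`. -/
def bHom {X : Type*} (ρ : X → ℝ) {K : ℕ} (ib : X → (Fin K → ℝ)) :
    bGpdSet ρ → (Fin K → ℝ) × ℝ :=
  fun p => (ib p.1.1 - ib p.1.2.1, p.1.2.2)

/-- The map `(r,s)` of the semi-direct groupoid `Γ(X)_h`:
`(γ, X₀) ↦ ((r γ, X₀), (s γ, X₀ + h γ))`. -/
def bRS {X : Type*} (ρ : X → ℝ) {K : ℕ} (ib : X → (Fin K → ℝ)) :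
    bGpdSet ρ × ((Fin K → ℝ) × ℝ) →
      (X × ((Fin K → ℝ) × ℝ)) × (X × ((Fin K → ℝ) × ℝ)) :=
  fun p => ((p.1.1.1, p.2), (p.1.1.2.1, p.2 + bHom ρ ib p.1))

open Topology

section Ambient

variable {X E : Type*} [TopologicalSpace X] [TopologicalSpace E] [AddGroup E]
  [IsTopologicalAddGroup E]

def bRSAmbient (ib : X → E) :
    (X × X × ℝ) × (E × ℝ) → (X × (E × ℝ)) × (X × (E × ℝ)) :=
  fun p => ((p.1.1, p.2), (p.1.2.1, p.2 + (ib p.1.1 - ib p.1.2.1, p.1.2.2)))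

theorem isClosedEmbedding_bRSAmbient [T2Space X] [T2Space E] {ib : X → E}
    (hib : Continuous ib) : IsClosedEmbedding (bRSAmbient ib) := by
  refine Function.LeftInverse.isClosedEmbedding
    (f := fun z => ((z.1.1, z.2.1, z.2.2.2 - z.1.2.2), z.1.2)) ?_ (by fun_prop)
    (by unfold bRSAmbient; fun_prop)
  rintro ⟨⟨x, y, a⟩, v⟩
  simp [bRSAmbient]

end Ambient

section BGroupoid

variable {X : Type*} {ρ : X → ℝ} {K : ℕ} {ib : X → (Fin K → ℝ)}

theorem eq_unit_of_bHom_eq_zero (p : bGpdSet ρ) (hp : bHom ρ ib p = 0)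
    (hxy : p.1.1 = p.1.2.1) : p.1 = (p.1.1, p.1.1, 0) := by
  simp only [bHom, Prod.mk_eq_zero] at hp
  ext
  exacts [rfl, hxy.symm, hp.2]

variable [TopologicalSpace X]

theorem isClosed_bGpdSet (hρ : Continuous ρ) : IsClosed (bGpdSet ρ) :=
  isClosed_eq (by fun_prop) (by fun_prop)

theorem isClosedEmbedding_bRS [T2Space X] (hρ : Continuous ρ) (hib : Continuous ib) :
    IsClosedEmbedding (bRS ρ ib) :=
  (isClosedEmbedding_bRSAmbient hib).comp
    ((isClosed_bGpdSet hρ).isClosedEmbedding_subtypeVal.prodMap IsClosedEmbedding.id)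

end BGroupoid

theorem stmt6_general {X : Type*} [TopologicalSpace X] [T2Space X]
    (ρ : X → ℝ) (hρc : Continuous ρ)
    {K : ℕ} (ib : X → (Fin K → ℝ)) (hibc : Continuous ib) :
    -- (r,s) is a closed map
    IsClosedMap (bRS ρ ib) ∧
    -- freeness: trivial isotropy groups
    (∀ p : bGpdSet ρ, bHom ρ ib p = 0 → p.1.1 = p.1.2.1 →
      p.1 = (p.1.1, p.1.1, 0)) ∧
    -- properness of the groupoid: (r,s) is a proper map
    IsProperMap (bRS ρ ib) := by
  have hRS := isClosedEmbedding_bRS hρc hibc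
  exact ⟨hRS.isClosedMap, eq_unit_of_bHom_eq_zero, hRS.isProperMap⟩

/-- for a compact manifold with boundary `X` with defining function
`ρ` and embedding `i_∂ : X → ℝ^{N-1}`, the map `(r,s)` of `Γ(X)_h` is a closed
map; consequently (the stabilizers being trivial) the semi-direct groupoid
`Γ(X)_h` is free and proper. -/
theorem stmt6 {X : Type*} [TopologicalSpace X] [CompactSpace X] [T2Space X]
    (ρ : X → ℝ) (hρc : Continuous ρ) (hρ : ∀ x, 0 ≤ ρ x)
    {K : ℕ} (ib : X → (Fin K → ℝ)) (hibc : Continuous ib)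
    (hibi : Function.Injective ib) :
    -- (r,s) is a closed map
    IsClosedMap (bRS ρ ib) ∧
    -- freeness: trivial isotropy groups
    (∀ p : bGpdSet ρ, bHom ρ ib p = 0 → p.1.1 = p.1.2.1 →
      p.1 = (p.1.1, p.1.1, 0)) ∧
    -- properness of the groupoid: (r,s) is a proper map
    IsProperMap (bRS ρ ib) :=
  stmt6_general ρ hρc ib hibc
end
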